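/- arXiv:2406.00246 — 8 statements merged into one kernel-verified Lean document; each statement's English description precedes it below -/
import Mathlib

section
/- Let t ≥ 2 and let G be a triangle-free graph of diameter 2 containing no K_{2,t} subgraph. If v and w are two vertices at distance exactly 2 in G, then deg(v) ≤ (t-1)·deg(w) - t + 2. -/
open SimpleGraph

/-- A graph has diameter 2: any two distinct vertices are adjacent or have a common
neighbour. -/
def DiamTwo {V : Type*} (G : SimpleGraph V) : Prop :=
  ∀ u v : V, u ≠ v → G.Adj u v ∨ ∃ w, G.Adj u w ∧ G.Adj w v

/-- `G` contains a subgraph isomorphic to the complete bipartite graph `K_{s,t}`. -/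
def HasKst {V : Type*} (s t : ℕ) (G : SimpleGraph V) : Prop :=
  ∃ f : completeBipartiteGraph (Fin s) (Fin t) →g G, Function.Injective f

lemma common_le {V : Type*} [Fintype V] [DecidableEq V] (G : SimpleGraph V) [DecidableRel G.Adj]
    {t : ℕ} (hkst : ¬ HasKst 2 t G) {a b : V} (hab : a ≠ b) :
    (G.neighborFinset a ∩ G.neighborFinset b).card ≤ t - 1 := by
  by_contra h
  push_neg at h
  have ht' : t ≤ (G.neighborFinset a ∩ G.neighborFinset b).card := by omega
  obtain ⟨s, hs, hcard⟩ := Finset.exists_subset_card_eq ht'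
  set g : Fin t → V := fun i => ((s.equivFin.symm (Fin.cast hcard.symm i) : {x // x ∈ s}) : V) with hg
  have hmem : ∀ i : Fin t, g i ∈ G.neighborFinset a ∩ G.neighborFinset b :=
    fun i => hs (s.equivFin.symm _).2
  have hga : ∀ i, G.Adj a (g i) := fun i => by
    have := hmem i; rw [Finset.mem_inter, mem_neighborFinset, mem_neighborFinset] at this
    exact this.1
  have hgb : ∀ i, G.Adj b (g i) := fun i => by
    have := hmem i; rw [Finset.mem_inter, mem_neighborFinset, mem_neighborFinset] at this
    exact this.2
  have hginj : Function.Injective g := by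
    intro i j hij
    have := s.equivFin.symm.injective (Subtype.ext hij)
    simpa [Fin.ext_iff] using congrArg Fin.val this
  apply hkst
  refine ⟨⟨Sum.elim ![a,b] g, ?_⟩, ?_⟩
  · rintro (i | i) (j | j) hadj
    · simp at hadj
    · have : G.Adj (![a,b] i) (g j) := by
        fin_cases i
        · simpa using hga j
        · simpa using hgb j
      simpa using this
    · have : G.Adj (![a,b] j) (g i) := by
        fin_cases j
        · simpa using hga i
        · simpa using hgb i
      simpa using this.symm
    · simp at hadj
  · rintro (i | i) (j | j) hf
    · have hf2 : (![a,b] : Fin 2 → V) i = ![a,b] j := hf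
      fin_cases i <;> fin_cases j <;> simp_all
    · exfalso
      have hf2 : (![a,b] : Fin 2 → V) i = g j := hf
      fin_cases i
      · have := hga j
        rw [show g j = a from by simpa using hf2.symm] at this
        exact G.irrefl this
      · have := hgb j
        rw [show g j = b from by simpa using hf2.symm] at this
        exact G.irrefl this
    · exfalso
      have hf2 : g i = (![a,b] : Fin 2 → V) j := hf
      fin_cases j
      · have := hga i
        rw [show g i = a from by simpa using hf2] at this
        exact G.irrefl this
      · have := hgb i
        rw [show g i = b from by simpa using hf2] at this
        exact G.irrefl this
    · have hf2 : g i = g j := hf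
      exact congrArg Sum.inr (hginj hf2)

/-- If `G` is triangle-free, `K_{2,t}`-free with diameter 2 and `v, w` are at distance
exactly 2, then `deg v ≤ (t-1)·deg w - t + 2`. -/
theorem stmt2 {V : Type*} [Fintype V] (G : SimpleGraph V) [DecidableRel G.Adj]
    (t : ℕ) (ht : 2 ≤ t)
    (htf : G.CliqueFree 3) (hkst : ¬ HasKst 2 t G) (hdiam : DiamTwo G)
    (v w : V) (hdist : G.dist v w = 2) :
    (G.degree v : ℤ) ≤ ((t : ℤ) - 1) * G.degree w - t + 2 := by
  classical
  have hvw : v ≠ w := by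
    intro h; rw [h] at hdist; simp [SimpleGraph.dist_self] at hdist
  have hnadj : ¬ G.Adj v w := by
    intro h
    have := SimpleGraph.dist_eq_one_iff_adj.mpr h
    omega
  set Nv := G.neighborFinset v with hNv
  set Nw := G.neighborFinset w with hNw
  set C := Nv ∩ Nw with hC
  set A := Nv \ Nw with hA
  set B := Nw \ Nv with hB
  -- C is nonempty
  obtain ⟨u, huv, huw⟩ : ∃ u, G.Adj v u ∧ G.Adj u w := by
    rcases hdiam v w hvw with h | h
    · exact absurd h hnadj
    · exact h
  have hC1 : 1 ≤ C.card := Finset.card_pos.mpr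
    ⟨u, Finset.mem_inter.mpr ⟨(mem_neighborFinset G v u).mpr huv,
      (mem_neighborFinset G w u).mpr huw.symm⟩⟩
  have hCt : C.card ≤ t - 1 := common_le G hkst hvw
  -- every x in A lies in some common-neighbour set of v and a vertex of B
  have hAsub : A ⊆ B.biUnion (fun y => G.neighborFinset v ∩ G.neighborFinset y) := by
    intro x hx
    rw [hA, Finset.mem_sdiff] at hx
    obtain ⟨hxv, hxw⟩ := hx
    rw [hNv, mem_neighborFinset] at hxv
    rw [hNw, mem_neighborFinset] at hxw
    have hxnw : x ≠ w := by rintro rfl; exact hnadj hxv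
    have hnadjxw : ¬ G.Adj x w := fun h => hxw h.symm
    obtain ⟨y, hxy, hyw⟩ : ∃ y, G.Adj x y ∧ G.Adj y w := by
      rcases hdiam x w hxnw with h | h
      · exact absurd h hnadjxw
      · exact h
    have hyv : ¬ G.Adj v y := by
      intro hvy
      exact htf {v, x, y} (SimpleGraph.is3Clique_triple_iff.mpr ⟨hxv, hvy, hxy⟩)
    refine Finset.mem_biUnion.mpr ⟨y, ?_, ?_⟩
    · rw [hB, Finset.mem_sdiff, hNw, hNv, mem_neighborFinset, mem_neighborFinset]
      exact ⟨hyw.symm, hyv⟩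
    · rw [Finset.mem_inter, mem_neighborFinset, mem_neighborFinset]
      exact ⟨hxv, hxy.symm⟩
  have hAcard : A.card ≤ B.card * (t - 1) := by
    calc A.card ≤ (B.biUnion (fun y => G.neighborFinset v ∩ G.neighborFinset y)).card :=
          Finset.card_le_card hAsub
      _ ≤ ∑ y ∈ B, (G.neighborFinset v ∩ G.neighborFinset y).card :=
          Finset.card_biUnion_le
      _ ≤ ∑ y ∈ B, (t - 1) := by
          refine Finset.sum_le_sum fun y hy => ?_
          have hyv : v ≠ y := by
            rintro rfl
            rw [hB, Finset.mem_sdiff, hNw, mem_neighborFinset] at hy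
            exact hnadj hy.1.symm
          exact common_le G hkst hyv
      _ = B.card * (t - 1) := by rw [Finset.sum_const, smul_eq_mul]
  have hdv : G.degree v = A.card + C.card := by
    rw [← G.card_neighborFinset_eq_degree, ← hNv, hA, hC]
    exact (Finset.card_sdiff_add_card_inter Nv Nw).symm
  have hdw : G.degree w = B.card + C.card := by
    rw [← G.card_neighborFinset_eq_degree, ← hNw, hB, hC, Finset.inter_comm]
    exact (Finset.card_sdiff_add_card_inter Nw Nv).symm
  have hAcard' : (A.card : ℤ) ≤ (B.card : ℤ) * ((t : ℤ) - 1) := by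
    have : (A.card : ℤ) ≤ ((B.card * (t - 1) : ℕ) : ℤ) := by exact_mod_cast hAcard
    rwa [Nat.cast_mul, Nat.cast_sub (by omega), Nat.cast_one] at this
  have hCt' : (C.card : ℤ) ≤ (t : ℤ) - 1 := by
    have : ((C.card : ℕ) : ℤ) ≤ ((t - 1 : ℕ) : ℤ) := by exact_mod_cast hCt
    rwa [Nat.cast_sub (by omega), Nat.cast_one] at this
  have hC1' : (1 : ℤ) ≤ C.card := by exact_mod_cast hC1
  have ht' : (2 : ℤ) ≤ t := by exact_mod_cast ht
  rw [hdv, hdw]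
  push_cast
  nlinarith [mul_nonneg (sub_nonneg.mpr ht') (sub_nonneg.mpr hC1'),
    mul_nonneg (sub_nonneg.mpr (show (2:ℤ) ≤ t from ht')) (sub_nonneg.mpr hC1')]
end

section
/- For every integer t ≥ 2, if G is a triangle-free K_{2,t}-free graph with diameter 2 and G is not a star graph, then the maximum degree Δ(G) satisfies Δ(G) ≤ (t-1)·((t-1)·δ(G) - t + 2) - t + 2, where δ(G) is the minimum degree. -/
open SimpleGraph

/-!
Two non-adjacent vertices `u ≠ v` have between `1` and `t - 1` common neighbours, and every
other neighbour of `v` is joined to `u` through a neighbour of `u` outside `N(v)`, each of which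
accounts for at most `t - 1` of them; hence `deg v ≤ (t - 1) deg u - t + 2`.
Applying this twice along a chain `v ≁ d ≁ u` from a vertex `u` of minimum degree gives the
bound. Such a `d` exists except when `v ~ u` and every non-neighbour of `v` is a neighbour of
`u`; then any `x ∈ N(u) \ {v}` has all its neighbours but `u` in `N(v)`, so `deg x ≤ t`, which is
within the bound since the absence of a dominating vertex forces `δ ≥ 2`.
-/

open Finset

namespace SimpleGraph

variable {V : Type*} (G : SimpleGraph V)

theorem hasKst_iff_isContained {s t : ℕ} :
    HasKst s t G ↔ completeBipartiteGraph (Fin s) (Fin t) ⊑ G :=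
  ⟨fun ⟨f, hf⟩ => ⟨f.toCopy hf⟩, fun ⟨c⟩ => ⟨c.toHom, c.injective⟩⟩

variable [Fintype V] [DecidableRel G.Adj] {t : ℕ}

theorem two_le_degree (hdiam : DiamTwo G) (hdom : ∀ v, ∃ w, w ≠ v ∧ ¬ G.Adj v w) (u : V) :
    2 ≤ G.degree u := by
  by_contra! h
  obtain ⟨w, hwu, huw⟩ := hdom u
  obtain ⟨p, hup, -⟩ := (hdiam u w hwu.symm).resolve_left huw
  have hunique : ∀ q, G.Adj u q → q = p := fun q huq =>
    card_le_one.1 (by rw [card_neighborFinset_eq_degree]; omega) q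
      ((G.mem_neighborFinset _ _).2 huq) p ((G.mem_neighborFinset _ _).2 hup)
  obtain ⟨x, hxp, hpx⟩ := hdom p
  rcases eq_or_ne x u with rfl | hxu
  · exact hpx hup.symm
  rcases hdiam u x hxu.symm with hux | ⟨c, huc, hcx⟩
  · exact hxp (hunique x hux)
  · exact hpx (hunique c huc ▸ hcx)

variable [DecidableEq V]

theorem card_neighborFinset_inter_lt (hkst : ¬ HasKst 2 t G) {a b : V} (hab : a ≠ b) :
    #(G.neighborFinset a ∩ G.neighborFinset b) < t := by
  by_contra! h
  obtain ⟨right, hright, hcard⟩ := exists_subset_card_eq h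
  refine hkst ((hasKst_iff_isContained G).2 (completeBipartiteGraph_isContained_iff.2
    ⟨{a, b}, right, by simp [hab], by simpa using hcard, fun x hx y hy => ?_⟩))
  have hy := hright hy
  simp only [coe_insert, coe_singleton, Set.mem_insert_iff, Set.mem_singleton_iff] at hx
  simp only [mem_inter, mem_neighborFinset] at hy
  rcases hx with rfl | rfl
  exacts [hy.1, hy.2]

theorem card_neighborFinset_sdiff_le (htf : G.CliqueFree 3) (hkst : ¬ HasKst 2 t G)
    (hdiam : DiamTwo G) {u v : V} (hadj : ¬ G.Adj u v) :
    #(G.neighborFinset v \ G.neighborFinset u) ≤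
      #(G.neighborFinset u \ G.neighborFinset v) * (t - 1) := by
  have hcover : G.neighborFinset v \ G.neighborFinset u ⊆
      (G.neighborFinset u \ G.neighborFinset v).biUnion
        (fun w => G.neighborFinset w ∩ G.neighborFinset v) := by
    intro x hx
    simp only [mem_sdiff, mem_neighborFinset] at hx
    obtain ⟨hvx, hux⟩ := hx
    obtain ⟨w, huw, hwx⟩ :=
      (hdiam u x (by rintro rfl; exact hadj hvx.symm)).resolve_left hux
    have hvw : ¬ G.Adj v w := fun hvw => htf {v, w, x} (is3Clique_triple_iff.2 ⟨hvw, hvx, hwx⟩)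
    simp only [mem_biUnion, mem_sdiff, mem_inter, mem_neighborFinset]
    exact ⟨w, ⟨huw, hvw⟩, hwx, hvx⟩
  refine (card_le_card hcover).trans (card_biUnion_le_card_mul _ _ _ fun w hw => ?_)
  have hwv : w ≠ v := by
    rintro rfl
    exact hadj (G.mem_neighborFinset _ _ |>.1 (mem_sdiff.1 hw).1)
  have := card_neighborFinset_inter_lt G hkst hwv
  omega

theorem degree_le_of_not_adj (ht : 2 ≤ t) (htf : G.CliqueFree 3) (hkst : ¬ HasKst 2 t G)
    (hdiam : DiamTwo G) {u v : V} (huv : u ≠ v) (hadj : ¬ G.Adj u v) :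
    (G.degree v : ℤ) ≤ (t - 1) * G.degree u - t + 2 := by
  obtain ⟨w, huw, hwv⟩ := (hdiam u v huv).resolve_left hadj
  have hcommon_pos : 0 < #(G.neighborFinset u ∩ G.neighborFinset v) :=
    card_pos.2 ⟨w, by simp [huw, hwv.symm]⟩
  have hcommon_lt := card_neighborFinset_inter_lt G hkst huv
  have hsdiff := card_neighborFinset_sdiff_le G htf hkst hdiam hadj
  have hdeg_u := card_sdiff_add_card_inter (G.neighborFinset u) (G.neighborFinset v)
  have hdeg_v := card_sdiff_add_card_inter (G.neighborFinset v) (G.neighborFinset u)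
  rw [inter_comm] at hdeg_v
  rw [card_neighborFinset_eq_degree] at hdeg_u hdeg_v
  zify [ht.trans' one_le_two] at *
  nlinarith

theorem degree_le_of_forall_not_adj_imp_adj (htf : G.CliqueFree 3) (hkst : ¬ HasKst 2 t G)
    {u v x : V} (huv : G.Adj u v) (hux : G.Adj u x) (hxv : x ≠ v)
    (hcover : ∀ z, z ≠ v → ¬ G.Adj v z → G.Adj u z) :
    G.degree x ≤ t := by
  have hvx : ¬ G.Adj v x := fun hvx => htf {u, v, x} (is3Clique_triple_iff.2 ⟨huv, hux, hvx⟩)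
  have hsub : G.neighborFinset x ⊆ insert u (G.neighborFinset x ∩ G.neighborFinset v) := by
    intro y hy
    rw [mem_neighborFinset] at hy
    rw [mem_insert, mem_inter, mem_neighborFinset, mem_neighborFinset]
    by_cases hyu : y = u
    · exact .inl hyu
    have hyv : y ≠ v := by rintro rfl; exact hvx hy.symm
    refine .inr ⟨hy, by_contra fun hvy => ?_⟩
    exact htf {u, x, y} (is3Clique_triple_iff.2 ⟨hux, hcover y hyv hvy, hy⟩)
  have := card_neighborFinset_inter_lt G hkst hxv
  rw [← card_neighborFinset_eq_degree]
  exact (card_le_card hsub).trans ((card_insert_le _ _).trans (by omega))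

theorem exists_not_adj_degree_le [Nonempty V] (ht : 2 ≤ t) (htf : G.CliqueFree 3)
    (hkst : ¬ HasKst 2 t G) (hdiam : DiamTwo G) (hdom : ∀ v, ∃ w, w ≠ v ∧ ¬ G.Adj v w)
    (v : V) :
    ∃ d, d ≠ v ∧ ¬ G.Adj v d ∧ (G.degree d : ℤ) ≤ (t - 1) * G.minDegree - t + 2 := by
  obtain ⟨u, hu⟩ := G.exists_minimal_degree_vertex
  have hδ : (2 : ℤ) ≤ G.minDegree := by exact_mod_cast hu ▸ two_le_degree G hdiam hdom u
  have ht' : (2 : ℤ) ≤ t := by exact_mod_cast ht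
  have hbound : ∀ w, w ≠ u → ¬ G.Adj u w →
      (G.degree w : ℤ) ≤ (t - 1) * G.minDegree - t + 2 := fun w hwu huw =>
    hu ▸ degree_le_of_not_adj G ht htf hkst hdiam hwu.symm huw
  by_cases hvu : v = u
  · subst hvu
    obtain ⟨w, hwv, hvw⟩ := hdom v
    exact ⟨w, hwv, hvw, hbound w hwv hvw⟩
  by_cases hadj : G.Adj v u
  swap
  · exact ⟨u, Ne.symm hvu, hadj, by rw [← hu]; nlinarith⟩
  by_cases hz : ∃ z, z ≠ v ∧ ¬ G.Adj v z ∧ ¬ G.Adj u z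
  · obtain ⟨z, hzv, hvz, huz⟩ := hz
    exact ⟨z, hzv, hvz, hbound z (by rintro rfl; exact hvz hadj) huz⟩
  push Not at hz
  obtain ⟨x, hx, hxv⟩ := exists_mem_ne (s := G.neighborFinset u)
    (by rw [card_neighborFinset_eq_degree]; exact two_le_degree G hdiam hdom u) v
  rw [mem_neighborFinset] at hx
  have hvx : ¬ G.Adj v x := fun hvx => htf {u, v, x} (is3Clique_triple_iff.2 ⟨hadj.symm, hx, hvx⟩)
  have hdeg : (G.degree x : ℤ) ≤ t := by
    exact_mod_cast degree_le_of_forall_not_adj_imp_adj G htf hkst hadj.symm hx hxv hz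
  exact ⟨x, hxv, hvx, by nlinarith⟩

end SimpleGraph

/-- For `t ≥ 2`, a triangle-free `K_{2,t}`-free diameter-2 graph which is not a star
satisfies `Δ(G) ≤ (t-1)((t-1)δ(G) - t + 2) - t + 2`.  (A triangle-free graph is a star
iff it has a dominating vertex.) -/
theorem stmt3 {V : Type*} [Fintype V] [Nonempty V] (G : SimpleGraph V)
    [DecidableRel G.Adj] (t : ℕ) (ht : 2 ≤ t)
    (htf : G.CliqueFree 3) (hkst : ¬ HasKst 2 t G) (hdiam : DiamTwo G)
    (hstar : ¬ ∃ v : V, ∀ w : V, w ≠ v → G.Adj v w) :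
    (G.maxDegree : ℤ) ≤
      ((t : ℤ) - 1) * (((t : ℤ) - 1) * G.minDegree - t + 2) - t + 2 := by
  classical
  have hdom : ∀ v, ∃ w, w ≠ v ∧ ¬ G.Adj v w := by
    push Not at hstar
    exact hstar
  obtain ⟨v, hv⟩ := G.exists_maximal_degree_vertex
  obtain ⟨d, hdv, hvd, hd⟩ := G.exists_not_adj_degree_le ht htf hkst hdiam hdom v
  have hv_le := G.degree_le_of_not_adj ht htf hkst hdiam hdv (hvd ·.symm)
  have ht' : (1 : ℤ) ≤ t - 1 := by omega
  rw [hv]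
  nlinarith
end

section
/- If G is a triangle-free graph on n vertices with diameter 2, then the sum over all vertices v of deg(v)^2 is at least n(n-1). -/
/-!
Diameter 2 means that the neighbours of a vertex `u`, together with their own neighbours other
than `u`, cover every vertex `w ≠ u`. A neighbour `v` of `u` supplies itself and `deg v - 1` further
vertices, so `n - 1 ≤ ∑_{v ~ u} deg v`. Summing over `u` counts every `v` exactly
`deg v` times, which gives `n (n - 1) ≤ ∑_v deg(v)²`.
-/

open SimpleGraph Finset

namespace SimpleGraph

variable {V : Type*} [Fintype V] (G : SimpleGraph V) [DecidableRel G.Adj]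

theorem sum_sum_neighborFinset_eq_sum_degree_smul {M : Type*} [AddCommMonoid M] (f : V → M) :
    ∑ u, ∑ v ∈ G.neighborFinset u, f v = ∑ v, G.degree v • f v := by
  rw [sum_comm' (t' := univ) (s' := fun v => G.neighborFinset v)
    (fun u v => by simp only [mem_univ, mem_neighborFinset, true_and, and_true, adj_comm])]
  simp only [sum_const, card_neighborFinset_eq_degree]

variable {G}

theorem card_insert_erase_neighborFinset [DecidableEq V] {u v : V} (h : G.Adj u v) :
    #(insert v ((G.neighborFinset v).erase u)) = G.degree v := by
  rw [card_insert_of_notMem fun hv => G.notMem_neighborFinset_self v (mem_of_mem_erase hv),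
    card_erase_add_one ((mem_neighborFinset _ _ _).2 h.symm), card_neighborFinset_eq_degree]

theorem _root_.DiamTwo.card_sub_one_le_sum_degree_neighborFinset [DecidableEq V] (hG : DiamTwo G)
    (u : V) : Fintype.card V - 1 ≤ ∑ v ∈ G.neighborFinset u, G.degree v := by
  have hcover : univ.erase u ⊆
      (G.neighborFinset u).biUnion fun v => insert v ((G.neighborFinset v).erase u) := by
    intro w hw
    have hwu : w ≠ u := ne_of_mem_erase hw
    simp only [mem_biUnion, mem_insert, mem_erase, mem_neighborFinset]
    rcases hG u w hwu.symm with huw | ⟨v, huv, hvw⟩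
    · exact ⟨w, huw, .inl rfl⟩
    · exact ⟨v, huv, .inr ⟨hwu, hvw⟩⟩
  calc Fintype.card V - 1 = #(univ.erase u) := by rw [card_erase_of_mem (mem_univ u), card_univ]
    _ ≤ ∑ v ∈ G.neighborFinset u, #(insert v ((G.neighborFinset v).erase u)) :=
      (card_le_card hcover).trans card_biUnion_le
    _ = ∑ v ∈ G.neighborFinset u, G.degree v :=
      sum_congr rfl fun v hv => card_insert_erase_neighborFinset ((mem_neighborFinset _ _ _).1 hv)

end SimpleGraph

theorem stmt4_general {V : Type*} [Fintype V] (G : SimpleGraph V) [DecidableRel G.Adj]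
    (hdiam : DiamTwo G) :
    Fintype.card V * (Fintype.card V - 1) ≤ ∑ v : V, (G.degree v) ^ 2 := by
  classical
  calc Fintype.card V * (Fintype.card V - 1) = ∑ _u : V, (Fintype.card V - 1) := by
        rw [sum_const, card_univ, smul_eq_mul]
    _ ≤ ∑ u, ∑ v ∈ G.neighborFinset u, G.degree v :=
      sum_le_sum fun u _ => hdiam.card_sub_one_le_sum_degree_neighborFinset u
    _ = ∑ v, G.degree v ^ 2 := by
      simp only [G.sum_sum_neighborFinset_eq_sum_degree_smul, smul_eq_mul, sq]

/-- In a triangle-free diameter-2 graph on `n` vertices, `∑ deg(v)² ≥ n(n-1)`. -/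
theorem stmt4 {V : Type*} [Fintype V] (G : SimpleGraph V) [DecidableRel G.Adj]
    (htf : G.CliqueFree 3) (hdiam : DiamTwo G) :
    Fintype.card V * (Fintype.card V - 1) ≤ ∑ v : V, (G.degree v) ^ 2 :=
  stmt4_general G hdiam
end

section
/- Let t ≥ 2. If G is a triangle-free n-vertex graph with diameter 2 in which every pair of non-adjacent vertices has at most t-1 common neighbours, then (1/(t-1)) · Σ_{v∈V(G)} (deg(v)^2 + (t-2)·deg(v)) ≤ n(n-1). -/
open SimpleGraph Finset

/-- If `G` is triangle-free of diameter 2 on `n` vertices, and every pair of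
non-adjacent vertices has at most `t-1` common neighbours, then
`∑ (deg(v)² + (t-2)·deg(v)) ≤ (t-1)·n·(n-1)`. -/
theorem stmt5 {V : Type*} [Fintype V] (G : SimpleGraph V) [DecidableRel G.Adj]
    (t : ℕ) (ht : 2 ≤ t)
    (htf : G.CliqueFree 3) (hdiam : DiamTwo G)
    (hcodeg : ∀ u v : V, u ≠ v → ¬ G.Adj u v →
      {w : V | G.Adj u w ∧ G.Adj w v}.ncard ≤ t - 1) :
    ∑ v : V, ((G.degree v) ^ 2 + (t - 2) * G.degree v) ≤
      (t - 1) * (Fintype.card V * (Fintype.card V - 1)) := by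
  classical
  set n := Fintype.card V with hn
  set c : V → V → ℕ := fun u v => ∑ w : V, if G.Adj u w ∧ G.Adj w v then 1 else 0 with hc
  have hdegf : ∀ w : V, G.degree w = ∑ u : V, (if G.Adj w u then 1 else 0) := by
    intro w
    rw [← SimpleGraph.card_neighborFinset_eq_degree, SimpleGraph.neighborFinset_eq_filter,
      Finset.card_filter]
  have hadj0 : ∀ u v : V, G.Adj u v → c u v = 0 := by
    intro u v huv
    refine Finset.sum_eq_zero fun w _ => ?_
    rw [if_neg]
    rintro ⟨h1, h2⟩
    exact htf {u, v, w} (SimpleGraph.is3Clique_triple_iff.mpr ⟨huv, h1, h2.symm⟩)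
  have hble : ∀ u v : V, u ≠ v → ¬ G.Adj u v → c u v ≤ t - 1 := by
    intro u v huv hna
    have h := hcodeg u v huv hna
    have h2 : {w : V | G.Adj u w ∧ G.Adj w v}.ncard
        = ∑ w : V, if G.Adj u w ∧ G.Adj w v then 1 else 0 := by
      rw [Set.ncard_eq_toFinset_card', Set.toFinset_setOf, Finset.card_filter]
    calc c u v = {w : V | G.Adj u w ∧ G.Adj w v}.ncard := h2.symm
      _ ≤ t - 1 := h
  have hA : ∑ u : V, ∑ v : V, c u v = ∑ w : V, G.degree w ^ 2 := by
    have h1 : ∀ u : V, ∑ v : V, c u v = ∑ w : V, (if G.Adj u w then G.degree w else 0) := by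
      intro u
      rw [hc, Finset.sum_comm]
      refine Finset.sum_congr rfl fun w _ => ?_
      by_cases h : G.Adj u w
      · simp [h, hdegf w]
      · simp [h]
    rw [Finset.sum_congr rfl fun u _ => h1 u, Finset.sum_comm]
    refine Finset.sum_congr rfl fun w _ => ?_
    have h2 : ∑ u : V, (if G.Adj u w then G.degree w else 0)
        = (∑ u : V, if G.Adj u w then 1 else 0) * G.degree w := by
      rw [Finset.sum_mul]
      refine Finset.sum_congr rfl fun u _ => ?_
      by_cases h : G.Adj u w <;> simp [h]
    rw [h2]
    have h3 : (∑ u : V, if G.Adj u w then 1 else 0) = G.degree w := by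
      rw [hdegf w]
      exact Finset.sum_congr rfl fun u _ => if_congr (G.adj_comm u w) rfl rfl
    rw [h3, sq]
  have hdiag : ∀ v : V, c v v = G.degree v := by
    intro v
    rw [hdegf v]
    refine Finset.sum_congr rfl fun w _ => if_congr ?_ rfl rfl
    exact ⟨fun h => h.1, fun h => ⟨h, h.symm⟩⟩
  have hper : ∀ u : V, (∑ v ∈ Finset.univ.erase u, c u v) + (t - 1) * G.degree u
      ≤ (t - 1) * (n - 1) := by
    intro u
    have h1 : ∑ v ∈ Finset.univ.erase u, (if G.Adj u v then t - 1 else 0)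
        = (t - 1) * G.degree u := by
      rw [Finset.sum_erase _ (by simp [G.irrefl])]
      rw [hdegf u, Finset.mul_sum]
      exact Finset.sum_congr rfl fun v _ => by by_cases h : G.Adj u v <;> simp [h]
    calc (∑ v ∈ Finset.univ.erase u, c u v) + (t - 1) * G.degree u
        = ∑ v ∈ Finset.univ.erase u, (c u v + if G.Adj u v then t - 1 else 0) := by
          rw [Finset.sum_add_distrib, h1]
      _ ≤ ∑ _v ∈ Finset.univ.erase u, (t - 1) := by
          refine Finset.sum_le_sum fun v hv => ?_
          have hne : u ≠ v := (Finset.ne_of_mem_erase hv).symm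
          by_cases h : G.Adj u v
          · rw [hadj0 u v h, if_pos h, zero_add]
          · rw [if_neg h, add_zero]
            exact hble u v hne h
      _ = (t - 1) * (n - 1) := by
          rw [Finset.sum_const, Finset.card_erase_of_mem (Finset.mem_univ u),
            Finset.card_univ, smul_eq_mul, mul_comm]
  have hsplit : ∑ u : V, ∑ v : V, c u v
      = (∑ u : V, G.degree u) + ∑ u : V, ∑ v ∈ Finset.univ.erase u, c u v := by
    rw [← Finset.sum_add_distrib]
    refine Finset.sum_congr rfl fun u _ => ?_
    rw [← hdiag u, Finset.add_sum_erase _ _ (Finset.mem_univ u)]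
  have ht1 : t - 1 = t - 2 + 1 := by omega
  calc ∑ v : V, ((G.degree v) ^ 2 + (t - 2) * G.degree v)
      = (∑ v : V, (G.degree v) ^ 2) + (t - 2) * ∑ v : V, G.degree v := by
        rw [Finset.sum_add_distrib, Finset.mul_sum]
    _ = (∑ u : V, ∑ v ∈ Finset.univ.erase u, c u v) + (t - 1) * ∑ v : V, G.degree v := by
        rw [← hA, hsplit, ht1]; ring
    _ = ∑ u : V, ((∑ v ∈ Finset.univ.erase u, c u v) + (t - 1) * G.degree u) := by
        rw [Finset.sum_add_distrib, Finset.mul_sum]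
    _ ≤ ∑ _u : V, (t - 1) * (n - 1) := Finset.sum_le_sum fun u _ => hper u
    _ = (t - 1) * (n * (n - 1)) := by
        rw [Finset.sum_const, Finset.card_univ, smul_eq_mul]; ring
end

section
/- Let A be a finite abelian group of order coprime to 2 (odd order) and S an inverse-closed subset not containing 0. Let T = {x + x : x ∈ S}. If u, v are non-adjacent vertices of the Cayley graph Cay(A,S) with u - v ∉ T, then u and v have an even number of common neighbours. -/
open SimpleGraph

/-- The Cayley graph of an abelian group `A` with connection set `S`:
`x` is adjacent to `y` iff `x - y ∈ S` (for `S` inverse-closed with `0 ∉ S`). -/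
def cayley {A : Type*} [AddCommGroup A] (S : Set A) : SimpleGraph A :=
  SimpleGraph.fromRel (fun x y => x - y ∈ S)

/-- A finite set closed under a fixed-point-free involution has even cardinality. -/
lemma even_card_of_invol {α : Type*} [DecidableEq α] (f : α → α) (s : Finset α)
    (hmem : ∀ x ∈ s, f x ∈ s) (hinv : ∀ x ∈ s, f (f x) = x)
    (hne : ∀ x ∈ s, f x ≠ x) : Even s.card := by
  induction s using Finset.strongInduction with
  | _ s ih =>
    rcases s.eq_empty_or_nonempty with rfl | ⟨a, ha⟩
    · simp
    · have hfa : f a ∈ s := hmem a ha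
      have hne' : f a ≠ a := hne a ha
      set t := s \ {a, f a} with ht
      have hsub : t ⊂ s := by
        refine Finset.sdiff_ssubset ?_ ?_
        · intro x hx
          simp only [Finset.mem_insert, Finset.mem_singleton] at hx
          rcases hx with rfl | rfl <;> assumption
        · exact ⟨a, by simp⟩
      have htmem : ∀ x ∈ t, x ∈ s ∧ x ≠ a ∧ x ≠ f a := by
        intro x hx
        simp only [ht, Finset.mem_sdiff, Finset.mem_insert, Finset.mem_singleton,
          not_or] at hx
        tauto
      have h1 : Even t.card := by
        refine ih t hsub ?_ ?_ ?_
        · intro x hx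
          obtain ⟨hxs, hxa, hxfa⟩ := htmem x hx
          simp only [ht, Finset.mem_sdiff, Finset.mem_insert, Finset.mem_singleton, not_or]
          refine ⟨hmem x hxs, ?_, ?_⟩
          · rintro rfl; exact hxfa (hinv x hxs).symm
          · intro h
            have := hinv x hxs
            rw [h, hinv a ha] at this
            exact hxa this.symm
        · intro x hx; exact hinv x (htmem x hx).1
        · intro x hx; exact hne x (htmem x hx).1
      have hcard : s.card = t.card + 2 := by
        have : t.card = s.card - 2 := by
          rw [ht, Finset.card_sdiff_of_subset]
          · simp [Finset.card_insert_of_notMem, hne'.symm]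
          · intro x hx
            simp only [Finset.mem_insert, Finset.mem_singleton] at hx
            rcases hx with rfl | rfl <;> assumption
        have h2 : 2 ≤ s.card := by
          have : ({a, f a} : Finset α) ⊆ s := by
            intro x hx
            simp only [Finset.mem_insert, Finset.mem_singleton] at hx
            rcases hx with rfl | rfl <;> assumption
          calc 2 = ({a, f a} : Finset α).card := by simp [hne'.symm]
            _ ≤ s.card := Finset.card_le_card this
        omega
      rw [hcard]
      exact h1.add (by norm_num)

/-- In a Cayley graph on a finite abelian group of odd order, two non-adjacent
vertices whose difference is not in `T = {x + x : x ∈ S}` have an even number of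
common neighbours. -/
theorem stmt9 {A : Type*} [AddCommGroup A] [Fintype A]
    (hodd : Odd (Fintype.card A)) (S : Set A)
    (hinv : ∀ s ∈ S, -s ∈ S) (h0 : (0 : A) ∉ S)
    (u v : A) (huv : u ≠ v) (hnadj : ¬ (cayley S).Adj u v)
    (hT : u - v ∉ {z : A | ∃ x ∈ S, x + x = z}) :
    Even {w : A | (cayley S).Adj u w ∧ (cayley S).Adj w v}.ncard := by
  classical
  -- adjacency characterization
  have hadj : ∀ x y : A, (cayley S).Adj x y ↔ x ≠ y ∧ x - y ∈ S := by
    intro x y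
    constructor
    · rintro ⟨hne, h | h⟩
      · exact ⟨hne, h⟩
      · refine ⟨hne, ?_⟩
        have := hinv _ h
        simpa [neg_sub] using this
    · rintro ⟨hne, h⟩
      exact ⟨hne, Or.inl h⟩
  set W : Set A := {w : A | (cayley S).Adj u w ∧ (cayley S).Adj w v} with hW
  rw [Set.ncard_eq_toFinset_card' W]
  apply even_card_of_invol (fun w => u + v - w)
  · intro w hw
    simp only [Set.mem_toFinset, hW, Set.mem_setOf_eq] at hw ⊢
    obtain ⟨h1, h2⟩ := hw
    rw [hadj] at h1 h2
    refine ⟨(hadj u (u + v - w)).mpr ⟨?_, ?_⟩, (hadj (u + v - w) v).mpr ⟨?_, ?_⟩⟩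
    · intro h
      apply h2.1
      have h4 : u - (u + v - w) = 0 := by rw [← h]; abel
      have h3 : w - v = 0 := by rw [show w - v = u - (u + v - w) by abel, h4]
      exact sub_eq_zero.mp h3
    · have h5 : u - (u + v - w) = w - v := by abel
      rw [h5]; exact h2.2
    · intro h
      apply h1.1
      have h3 : u - w = 0 := by
        have h' : u + v - w - v = 0 := by rw [h]; abel
        calc u - w = u + v - w - v := by abel
          _ = 0 := h'
      exact sub_eq_zero.mp h3
    · have h5 : u + v - w - v = u - w := by abel
      rw [h5]; exact h1.2
  · intro w _; abel
  · intro w hw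
    simp only [Set.mem_toFinset, hW, Set.mem_setOf_eq] at hw
    obtain ⟨h1, h2⟩ := hw
    rw [hadj] at h1 h2
    intro h
    apply hT
    refine ⟨u - w, h1.2, ?_⟩
    have hwv : u - w = w - v := by
      have : u + v - w - w = 0 := by rw [h]; abel
      have h2' : (u - w) - (w - v) = 0 := by
        calc (u - w) - (w - v) = u + v - w - w := by abel
          _ = 0 := this
      exact sub_eq_zero.mp h2'
    calc u - w + (u - w) = (u - w) + (w - v) := by rw [hwv]
      _ = u - v := by abel
end

section
/- Let A be an elementary abelian 2-group of order 2^d, and S ⊆ A \ {0} a subset of size k (automatically inverse-closed) such that the Cayley graph Cay(A,S) is triangle-free, has diameter 2, and every pair of non-adjacent vertices has at most 2 common neighbours. Then 2^{d+1} = k^2 + k + 2. -/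
open SimpleGraph Finset

variable {d : ℕ}

lemma addself (v : Fin d → ZMod 2) : v + v = 0 := by
  funext i
  simp only [Pi.add_apply, Pi.zero_apply]
  exact CharTwo.add_self_eq_zero (v i)

lemma subeq (a b : Fin d → ZMod 2) : a - b = a + b := by
  rw [sub_eq_add_neg, neg_eq_of_add_eq_zero_right (addself b)]

lemma adj_iff (S : Finset (Fin d → ZMod 2)) (h0 : (0 : Fin d → ZMod 2) ∉ S)
    (u v : Fin d → ZMod 2) :
    (cayley (S : Set (Fin d → ZMod 2))).Adj u v ↔ u + v ∈ S := by
  unfold cayley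
  rw [fromRel_adj]
  constructor
  · rintro ⟨hne, h | h⟩
    · rwa [subeq] at h
    · rwa [subeq, add_comm] at h
  · intro h
    refine ⟨?_, Or.inl (by rwa [subeq])⟩
    rintro rfl
    rw [addself] at h
    exact h0 h

lemma pairsum_not_mem (S : Finset (Fin d → ZMod 2)) (h0 : (0 : Fin d → ZMod 2) ∉ S)
    (htf : (cayley (S : Set (Fin d → ZMod 2))).CliqueFree 3)
    {x y : Fin d → ZMod 2} (hx : x ∈ S) (hy : y ∈ S) (_hxy : x ≠ y) : x + y ∉ S := by
  intro hz
  apply htf {0, x, x + y}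
  rw [is3Clique_triple_iff]
  refine ⟨?_, ?_, ?_⟩ <;> rw [adj_iff S h0]
  · simpa using hx
  · simpa using hz
  · rwa [← add_assoc, addself, zero_add]

/-- If `S` is a `k`-subset of the elementary abelian 2-group of order `2^d` with
`0 ∉ S`, whose Cayley graph is triangle-free, has diameter 2, and in which every
pair of non-adjacent vertices has at most 2 common neighbours, then
`2^(d+1) = k² + k + 2`. -/
theorem stmt10 (d : ℕ) (S : Finset (Fin d → ZMod 2)) (h0 : 0 ∉ S)
    (htf : (cayley (S : Set (Fin d → ZMod 2))).CliqueFree 3)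
    (hdiam : ∀ u v : Fin d → ZMod 2, u ≠ v →
      (cayley (S : Set (Fin d → ZMod 2))).Adj u v ∨
        ∃ w, (cayley (S : Set (Fin d → ZMod 2))).Adj u w ∧
          (cayley (S : Set (Fin d → ZMod 2))).Adj w v)
    (hcodeg : ∀ u v : Fin d → ZMod 2, u ≠ v →
      ¬ (cayley (S : Set (Fin d → ZMod 2))).Adj u v →
      {w | (cayley (S : Set (Fin d → ZMod 2))).Adj u w ∧
          (cayley (S : Set (Fin d → ZMod 2))).Adj w v}.ncard ≤ 2) :
    2 ^ (d + 1) = S.card ^ 2 + S.card + 2 := by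
  classical
  set P : Finset ((Fin d → ZMod 2) × (Fin d → ZMod 2)) := (S ×ˢ S).filter (fun p => p.1 ≠ p.2) with hP
  set Z : Finset (Fin d → ZMod 2) := Finset.univ \ insert 0 S with hZ
  -- every fiber has cardinality 2
  have hfiber : ∀ z ∈ Z, (P.filter (fun p => p.1 + p.2 = z)).card = 2 := by
    intro z hzZ
    simp only [hZ, mem_sdiff, mem_insert, not_or] at hzZ
    obtain ⟨-, hz0, hzS⟩ := hzZ
    have hz0' : (0 : Fin d → ZMod 2) ≠ z := fun h => hz0 h.symm
    have hnadj : ¬ (cayley (S : Set (Fin d → ZMod 2))).Adj 0 z := by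
      rw [adj_iff S h0, zero_add]; exact hzS
    -- existence of a representation
    obtain hadj | ⟨w, hw1, hw2⟩ := hdiam 0 z hz0'
    · exact absurd hadj hnadj
    rw [adj_iff S h0, zero_add] at hw1
    rw [adj_iff S h0] at hw2
    have hwz : w + z ∈ S := hw2
    have hwne : w ≠ z + w := by
      intro h
      apply hz0
      have := congrArg (· + w) h
      simpa [add_assoc, addself] using this.symm
    -- the common-neighbour set
    have hW := hcodeg 0 z hz0' hnadj
    set W : Set (Fin d → ZMod 2) := {w | (cayley (S : Set (Fin d → ZMod 2))).Adj 0 w ∧ (cayley (S : Set (Fin d → ZMod 2))).Adj w z} with hWdef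
    have hmemW : ∀ x : Fin d → ZMod 2, x ∈ W ↔ x ∈ S ∧ x + z ∈ S := by
      intro x
      simp only [hWdef, Set.mem_setOf_eq, adj_iff S h0, zero_add]
    have hwW : w ∈ W := (hmemW w).2 ⟨hw1, hwz⟩
    have hzwW : z + w ∈ W := by
      rw [hmemW]
      constructor
      · rwa [add_comm] at hwz
      · rwa [add_comm z w, add_assoc, addself, add_zero]
    have hWeq : W = {w, z + w} := by
      refine (Set.eq_of_subset_of_ncard_le ?_ ?_ (Set.toFinite W)).symm
      · intro x hx
        rcases hx with rfl | hx
        · exact hwW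
        · rw [Set.mem_singleton_iff] at hx; subst hx; exact hzwW
      · rwa [Set.ncard_pair hwne]
    -- fiber is exactly {(w, z+w), (z+w, w)}
    have hfib : P.filter (fun p => p.1 + p.2 = z) = {(w, z + w), (z + w, w)} := by
      ext ⟨x, y⟩
      simp only [hP, mem_filter, mem_product, mem_insert, mem_singleton, Prod.mk.injEq]
      constructor
      · rintro ⟨⟨⟨hxS, hyS⟩, hxy⟩, hsum⟩
        have hxW : x ∈ W := by
          rw [hmemW]
          refine ⟨hxS, ?_⟩
          have : x + z = y := by
            rw [← hsum, ← add_assoc, addself, zero_add]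
          rwa [this]
        have hyx : y = x + z := by
          rw [← hsum, ← add_assoc, addself, zero_add]
        rw [hWeq] at hxW
        rcases hxW with rfl | hxW
        · left
          refine ⟨rfl, ?_⟩
          rw [hyx, add_comm]
        · rw [Set.mem_singleton_iff] at hxW
          subst hxW
          right
          refine ⟨rfl, ?_⟩
          rw [hyx, add_comm z w, add_assoc, addself, add_zero]
      · rintro (⟨rfl, rfl⟩ | ⟨rfl, rfl⟩)
        · refine ⟨⟨⟨hw1, ?_⟩, hwne⟩, ?_⟩
          · rwa [add_comm] at hwz
          · rw [← add_assoc, add_comm x z, add_assoc, addself, add_zero]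
        · refine ⟨⟨⟨?_, hw1⟩, fun h => hwne h.symm⟩, ?_⟩
          · rwa [add_comm] at hwz
          · rw [add_assoc, addself, add_zero]
    rw [hfib]
    rw [card_insert_of_notMem, card_singleton]
    simp only [mem_singleton, Prod.mk.injEq, not_and]
    intro h
    exact absurd h hwne
  -- fiberwise counting
  have hmap : ∀ p ∈ P, p.1 + p.2 ∈ Z := by
    rintro ⟨x, y⟩ hp
    simp only [hP, mem_filter, mem_product] at hp
    obtain ⟨⟨hxS, hyS⟩, hxy⟩ := hp
    simp only [hZ, mem_sdiff, mem_insert, not_or, mem_univ, true_and]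
    refine ⟨?_, pairsum_not_mem S h0 htf hxS hyS hxy⟩
    intro h
    apply hxy
    have := congrArg (· + y) h
    simpa [add_assoc, addself] using this
  have hcount : P.card = 2 * Z.card := by
    rw [card_eq_sum_card_fiberwise hmap]
    rw [Finset.sum_congr rfl hfiber]
    simp [mul_comm]
  -- P.card = S.card^2 - S.card
  have hPcard : P.card + S.card = S.card * S.card := by
    have hsplit := card_filter_add_card_filter_not (s := S ×ˢ S)
      (p := fun p => p.1 ≠ p.2)
    have hdiag : ((S ×ˢ S).filter (fun p => ¬ p.1 ≠ p.2)).card = S.card := by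
      have : (S ×ˢ S).filter (fun p => ¬ p.1 ≠ p.2) = S.image (fun x => (x, x)) := by
        ext ⟨x, y⟩
        simp only [mem_filter, mem_product, not_not, mem_image, Prod.mk.injEq]
        constructor
        · rintro ⟨⟨hx, -⟩, rfl⟩; exact ⟨x, hx, rfl, rfl⟩
        · rintro ⟨a, ha, rfl, rfl⟩; exact ⟨⟨ha, ha⟩, rfl⟩
      rw [this, card_image_of_injective _ (fun a b h => (Prod.mk.injEq _ _ _ _ ▸ h).1)]
    rw [← card_product, ← hsplit, hdiag, hP]
  have hZcard : Z.card + (S.card + 1) = 2 ^ d := by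
    have h1 : (insert (0 : Fin d → ZMod 2) S).card = S.card + 1 := card_insert_of_notMem h0
    have h2 : Z.card = (Finset.univ : Finset (Fin d → ZMod 2)).card - (insert (0 : Fin d → ZMod 2) S).card := by
      rw [hZ, card_sdiff_of_subset (subset_univ _)]
    have h3 : (Finset.univ : Finset (Fin d → ZMod 2)).card = 2 ^ d := by
      simp [card_univ, Fintype.card_fun]
    have h4 : (insert (0 : Fin d → ZMod 2) S).card ≤ (Finset.univ : Finset (Fin d → ZMod 2)).card :=
      card_le_card (subset_univ _)
    omega
  have hpow : (2 : ℕ) ^ (d + 1) = 2 * 2 ^ d := by ring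
  rw [hpow, sq]
  linarith [hcount, hPcard, hZcard]
end

section
/- Let A be a finite abelian group whose order n is coprime to 6, and let S ⊆ A be an inverse-closed subset of size k with 0 ∉ S such that Cay(A,S) is triangle-free, K_{2,3}-free and has diameter 2. Then 2n - 1 = (k+1)^2; in particular 2n - 1 is a perfect square. -/
/-!
Write `r(z)` for the number of ordered representations `z = x + y` with `x, y ∈ S`, so that
`∑ z, r(z) = k²`. In `Cay(A,S)` these representations are the common neighbours of `0` and `z`.
Triangle-freeness makes `S` sum-free, so `r = 0` on `S`; `r(0) = k`. For `z ∉ S ∪ {0}`,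
`K_{2,3}`-freeness gives `r(z) ≤ 2` and diameter 2 gives `r(z) ≥ 1`; since `x ↦ z - x` permutes
the summands of `z` and, doubling being injective (`n` is odd), has a fixed point only when `z` is
one of the `k` doubles `x + x`, we get `r(z) = 1` on the doubles and `r(z) = 2` elsewhere. Summing,
`k² = k + k + 2(n - 1 - 2k)`, that is `(k + 1)² = 2n - 1`.
-/

open SimpleGraph

open Finset Function

section Summands

variable {A : Type*} [AddCommGroup A] [DecidableEq A] {S : Finset A} {x w z : A}

def summands (S : Finset A) (z : A) : Finset A := {x ∈ S | z - x ∈ S}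

lemma mem_summands : x ∈ summands S z ↔ x ∈ S ∧ z - x ∈ S := mem_filter

lemma mem_summands_add_self (hx : x ∈ S) : x ∈ summands S (x + x) :=
  mem_summands.2 ⟨hx, by rwa [add_sub_cancel_right]⟩

lemma sub_mem_summands (hx : x ∈ summands S z) : z - x ∈ summands S z := by
  rw [mem_summands, sub_sub_cancel] at *
  exact hx.symm

lemma summands_zero (hinv : ∀ s ∈ S, -s ∈ S) : summands S 0 = S :=
  filter_true_of_mem fun x hx => by simpa using hinv x hx

lemma summands_eq_empty_of_mem (hfree : ∀ x ∈ S, ∀ y ∈ S, x + y ∉ S) (hz : z ∈ S) :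
    summands S z = ∅ :=
  filter_false_of_mem fun x hx hzx => hfree x hx _ hzx (by rwa [add_sub_cancel])

lemma summands_add_self (hinj : Injective fun x : A => x + x) (hx : x ∈ S)
    (hle : #(summands S (x + x)) ≤ 2) : summands S (x + x) = {x} := by
  refine eq_singleton_iff_unique_mem.2 ⟨mem_summands_add_self hx, fun y hy => ?_⟩
  by_contra hyx
  have hx_ne : x ≠ x + x - y := fun h => hyx (add_left_cancel (eq_sub_iff_add_eq.1 h))
  have hy_ne : y ≠ x + x - y := fun h => hyx (hinj (eq_sub_iff_add_eq.1 h))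
  have hsub : {x, y, x + x - y} ⊆ summands S (x + x) := by
    simp only [insert_subset_iff, singleton_subset_iff]
    exact ⟨mem_summands_add_self hx, hy, sub_mem_summands hy⟩
  have := card_le_card hsub
  rw [card_insert_of_notMem (by simp [Ne.symm hyx, hx_ne]), card_pair hy_ne] at this
  omega

lemma card_summands_eq_two (hle : #(summands S z) ≤ 2) (hw : w ∈ summands S z)
    (hz : ∀ x ∈ S, x + x ≠ z) : #(summands S z) = 2 := by
  have hne : w ≠ z - w := fun h => hz w (mem_summands.1 hw).1 (eq_sub_iff_add_eq.1 h)
  have := card_le_card (insert_subset hw (singleton_subset_iff.2 (sub_mem_summands hw)))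
  rw [card_pair hne] at this
  omega

lemma sum_card_summands [Fintype A] (S : Finset A) : ∑ z, #(summands S z) = #S * #S := by
  simp only [summands, card_filter]
  rw [sum_comm, ← smul_eq_mul, ← sum_const]
  exact sum_congr rfl fun x _ =>
    ((Equiv.subRight x).sum_comp fun y => if y ∈ S then 1 else 0).trans (by simp)

lemma card_summands_add_card_halves (hinj : Injective fun x : A => x + x)
    (hfree : ∀ x ∈ S, ∀ y ∈ S, x + y ∉ S) (hle : ∀ z ∉ S, z ≠ 0 → #(summands S z) ≤ 2)
    (hpos : ∀ z ∉ S, z ≠ 0 → (summands S z).Nonempty) (hz : z ≠ 0) :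
    #(summands S z) + #{x ∈ S | x + x = z} + (if z ∈ S then 2 else 0) = 2 := by
  by_cases hzS : z ∈ S
  · have : {x ∈ S | x + x = z} = ∅ :=
      filter_false_of_mem fun x hx hxz => hfree x hx x hx (hxz ▸ hzS)
    simp [summands_eq_empty_of_mem hfree hzS, this, hzS]
  by_cases hdbl : ∃ x ∈ S, x + x = z
  · obtain ⟨x, hx, rfl⟩ := hdbl
    have : {y ∈ S | y + y = x + x} = {x} := by
      ext y
      simp only [mem_filter, mem_singleton]
      exact ⟨fun h => hinj h.2, by rintro rfl; exact ⟨hx, rfl⟩⟩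
    rw [summands_add_self hinj hx (hle _ hzS hz), this, if_neg hzS]
    rfl
  · push Not at hdbl
    obtain ⟨w, hw⟩ := hpos z hzS hz
    rw [card_summands_eq_two (hle z hzS hz) hw hdbl, filter_false_of_mem hdbl, if_neg hzS]
    rfl

theorem card_mul_card_add_two_mul_card [Fintype A] (hinv : ∀ s ∈ S, -s ∈ S)
    (hinj : Injective fun x : A => x + x) (hfree : ∀ x ∈ S, ∀ y ∈ S, x + y ∉ S)
    (hle : ∀ z ∉ S, z ≠ 0 → #(summands S z) ≤ 2)
    (hpos : ∀ z ∉ S, z ≠ 0 → (summands S z).Nonempty) :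
    #S * #S + 2 * #S = 2 * (Fintype.card A - 1) := by
  have h0 : (0 : A) ∉ S := fun h => hfree 0 h 0 h (by rwa [add_zero])
  have hhalves0 : {x ∈ S | x + x = 0} = ∅ :=
    filter_false_of_mem fun x hx hx0 => h0 (hinj (hx0.trans (add_zero 0).symm) ▸ hx)
  set f : A → ℕ := fun z => #(summands S z) + #{x ∈ S | x + x = z} + if z ∈ S then 2 else 0
  have hsum : ∑ z, f z = #S * #S + #S + 2 * #S := by
    simp only [f, sum_add_distrib, sum_card_summands,
      ← card_eq_sum_card_fiberwise fun x _ => mem_univ (x + x), sum_ite_mem, univ_inter,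
      sum_const, smul_eq_mul]
    ring
  have hsplit : ∑ z, f z = #S + (Fintype.card A - 1) * 2 := by
    rw [← add_sum_erase _ _ (mem_univ 0), sum_congr rfl fun z hz =>
      card_summands_add_card_halves hinj hfree hle hpos (ne_of_mem_erase hz), sum_const,
      card_erase_of_mem (mem_univ _), card_univ, smul_eq_mul]
    simp only [f, summands_zero hinv, hhalves0, h0, card_empty, if_false, add_zero]
  omega

end Summands

section Cayley

variable {A : Type*} [AddCommGroup A] {S : Finset A}

lemma cayley_adj_iff (hinv : ∀ s ∈ S, -s ∈ S) (h0 : (0 : A) ∉ S) {u v : A} :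
    (cayley (S : Set A)).Adj u v ↔ u - v ∈ S := by
  rw [cayley, fromRel_adj, mem_coe, mem_coe]
  constructor
  · rintro ⟨-, h | h⟩
    · exact h
    · simpa using hinv _ h
  · intro h
    exact ⟨fun huv => h0 (by rwa [huv, sub_self] at h), Or.inl h⟩

lemma cayley_adj_zero_iff (hinv : ∀ s ∈ S, -s ∈ S) (h0 : (0 : A) ∉ S) {z : A} :
    (cayley (S : Set A)).Adj 0 z ↔ z ∈ S := by
  rw [adj_comm, cayley_adj_iff hinv h0, sub_zero]

lemma add_notMem_of_cliqueFree (hinv : ∀ s ∈ S, -s ∈ S) (h0 : (0 : A) ∉ S)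
    (htf : (cayley (S : Set A)).CliqueFree 3) {x y : A} (hx : x ∈ S) (hy : y ∈ S) :
    x + y ∉ S := by
  classical
  intro hxy
  exact htf {x + y, y, 0} (is3Clique_triple_iff.2 ⟨by simpa [cayley_adj_iff hinv h0],
    by simpa [cayley_adj_iff hinv h0], by simpa [cayley_adj_iff hinv h0]⟩)

lemma setOf_adj_zero_adj_eq_summands [DecidableEq A] (hinv : ∀ s ∈ S, -s ∈ S)
    (h0 : (0 : A) ∉ S) (z : A) :
    {w | (cayley (S : Set A)).Adj 0 w ∧ (cayley (S : Set A)).Adj w z} = summands S z := by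
  ext w
  rw [Set.mem_ofPred_eq, cayley_adj_zero_iff hinv h0, adj_comm, cayley_adj_iff hinv h0, mem_coe,
    mem_summands]

end Cayley

/-- If `A` is a finite abelian group of order `n` coprime to 6 and `S` is an
inverse-closed `k`-subset with `0 ∉ S` whose Cayley graph is triangle-free,
`K_{2,3}`-free (non-adjacent vertices have at most 2 common neighbours) and has
diameter 2, then `2n - 1 = (k+1)²`. -/
theorem stmt11 {A : Type*} [AddCommGroup A] [Fintype A]
    (hcop : Nat.Coprime (Fintype.card A) 6)
    (S : Finset A) (hinv : ∀ s ∈ S, -s ∈ S) (h0 : (0 : A) ∉ S)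
    (htf : (cayley (S : Set A)).CliqueFree 3)
    (hcodeg : ∀ u v : A, u ≠ v → ¬ (cayley (S : Set A)).Adj u v →
      {w : A | (cayley (S : Set A)).Adj u w ∧ (cayley (S : Set A)).Adj w v}.ncard ≤ 2)
    (hdiam : ∀ u v : A, u ≠ v → (cayley (S : Set A)).Adj u v ∨
      ∃ w, (cayley (S : Set A)).Adj u w ∧ (cayley (S : Set A)).Adj w v) :
    2 * Fintype.card A - 1 = (S.card + 1) ^ 2 := by
  classical
  have hinj : Injective fun x : A => x + x := by
    have hcop2 : (Nat.card A).Coprime 2 :=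
      Nat.card_eq_fintype_card (α := A) ▸ hcop.coprime_dvd_right (by norm_num)
    simpa only [two_nsmul] using hcop2.nsmul_right_bijective.injective
  have hcount := card_mul_card_add_two_mul_card hinv hinj
    (fun x hx y hy => add_notMem_of_cliqueFree hinv h0 htf hx hy)
    (fun z hzS hz0 => by
      simpa [setOf_adj_zero_adj_eq_summands hinv h0] using
        hcodeg 0 z hz0.symm (by rwa [cayley_adj_zero_iff hinv h0]))
    (fun z hzS hz0 => by
      obtain hadj | ⟨w, hw⟩ := hdiam 0 z hz0.symm
      · exact absurd ((cayley_adj_zero_iff hinv h0).1 hadj) hzS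
      · refine ⟨w, ?_⟩
        rw [← mem_coe, ← setOf_adj_zero_adj_eq_summands hinv h0]
        exact hw)
  have hcard : 0 < Fintype.card A := Fintype.card_pos
  rw [show (#S + 1) ^ 2 = #S * #S + 2 * #S + 1 by ring]
  omega
end

section
/- Let d ≥ 3 and suppose S ⊆ (Z/2)^d \ {0} is such that (i) no x,y,z ∈ S satisfy x + y = z, and (ii) every z ∉ S ∪ {0} has exactly one representation z = x + y with x ≠ y both in S. Then d = 4 and |S| = 5. -/
lemma nt12 (d k m : ℕ) (hd : 3 ≤ d) (h : 2^(d+1) = k^2 + k + 2)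
    (hm : m^2 + 1 = k) : d = 4 ∧ k = 5 := by
  have hmle : m ≤ m^2 := by nlinarith
  have hab : (m^2+m+2) * (m^2 - m + 2) = 2^(d+1) := by
    zify [hmle]
    have h' : ((2:ℤ))^(d+1) = (k:ℤ)^2+(k:ℤ)+2 := by exact_mod_cast h
    have hm' : ((m:ℤ))^2+1 = (k:ℤ) := by exact_mod_cast hm
    rw [h', ← hm']; ring
  have ha : (m^2+m+2) ∣ 2^(d+1) := ⟨_, hab.symm⟩
  have hb : (m^2 - m + 2) ∣ 2^(d+1) := Dvd.intro_left _ hab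
  obtain ⟨i, hi, hia⟩ := (Nat.dvd_prime_pow Nat.prime_two).1 ha
  obtain ⟨j, hj, hjb⟩ := (Nat.dvd_prime_pow Nat.prime_two).1 hb
  have hle : (2:ℕ)^j ≤ 2^i := by rw [← hia, ← hjb]; omega
  have hji : j ≤ i := (Nat.pow_le_pow_iff_right (by norm_num)).1 hle
  have hdvd : (m^2 - m + 2) ∣ (m^2+m+2) := by
    rw [hia, hjb]; exact pow_dvd_pow 2 hji
  have hdvd2 : (m^2 - m + 2) ∣ 2*m := by
    have h2 := Nat.dvd_sub hdvd dvd_rfl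
    have h3 : (m^2+m+2) - (m^2 - m + 2) = 2*m := by omega
    rwa [h3] at h2
  have hm2 : m ≤ 2 := by
    by_contra hc
    push_neg at hc
    have h5 := Nat.le_of_dvd (by omega) hdvd2
    have hsq : m^2 = m*m := sq m
    have h6 : 3*m ≤ m*m := Nat.mul_le_mul_right m hc
    omega
  interval_cases m
  · exfalso
    have h4 : (2:ℕ)^(d+1) = 2^2 := by omega
    have := Nat.pow_right_injective (le_refl 2) h4
    omega
  · exfalso
    have h4 : (2:ℕ)^(d+1) = 2^3 := by omega
    have := Nat.pow_right_injective (le_refl 2) h4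
    omega
  · have h4 : (2:ℕ)^(d+1) = 2^5 := by omega
    have := Nat.pow_right_injective (le_refl 2) h4
    omega

/-- If `S ⊆ (ℤ/2)^d \ {0}` with `d ≥ 3` is such that (i) no `x, y, z ∈ S` satisfy
`x + y = z`, and (ii) every `z ∉ S ∪ {0}` has exactly one representation `z = x + y`
with `x ≠ y` both in `S`, then `d = 4` and `|S| = 5`. -/
theorem stmt12 (d : ℕ) (hd : 3 ≤ d) (S : Finset (Fin d → ZMod 2)) (h0 : 0 ∉ S)
    (htf : ¬ ∃ x ∈ S, ∃ y ∈ S, ∃ z ∈ S, x + y = z)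
    (hrep : ∀ z : Fin d → ZMod 2, z ∉ S → z ≠ 0 →
      ∃ x y, x ∈ S ∧ y ∈ S ∧ x ≠ y ∧ x + y = z ∧
        ∀ x' y', x' ∈ S → y' ∈ S → x' ≠ y' → x' + y' = z →
          (x' = x ∧ y' = y) ∨ (x' = y ∧ y' = x)) :
    d = 4 ∧ S.card = 5 := by
  classical
  set k := S.card with hk
  have h2 : ∀ a : ZMod 2, a + a = 0 := by decide
  have hadd : ∀ v : Fin d → ZMod 2, v + v = 0 := fun v => funext fun i => h2 (v i)
  set T : Finset (Fin d → ZMod 2) := Finset.univ \ insert 0 S with hT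
  -- maps_to
  have hmaps : ∀ p ∈ S.offDiag, p.1 + p.2 ∈ T := by
    rintro ⟨x, y⟩ hp
    simp only [Finset.mem_offDiag] at hp
    obtain ⟨hx, hy, hxy⟩ := hp
    simp only [hT, Finset.mem_sdiff, Finset.mem_univ, Finset.mem_insert, true_and]
    push_neg
    constructor
    · intro h
      apply hxy
      calc x = x + 0 := (add_zero x).symm
        _ = x + (y + y) := by rw [hadd]
        _ = (x + y) + y := (add_assoc x y y).symm
        _ = 0 + y := by rw [h]
        _ = y := zero_add y
    · intro hmem
      exact htf ⟨x, hx, y, hy, x + y, hmem, rfl⟩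
  -- fiber cardinality
  have hfiber : ∀ z ∈ T, (S.offDiag.filter fun p => p.1 + p.2 = z).card = 2 := by
    intro z hz
    simp only [hT, Finset.mem_sdiff, Finset.mem_univ, Finset.mem_insert, true_and] at hz
    push_neg at hz
    obtain ⟨x, y, hx, hy, hxy, hsum, huniq⟩ := hrep z hz.2 hz.1
    have hset : (S.offDiag.filter fun p => p.1 + p.2 = z) = {(x,y),(y,x)} := by
      ext ⟨a, b⟩
      simp only [Finset.mem_filter, Finset.mem_offDiag, Finset.mem_insert,
        Finset.mem_singleton, Prod.mk.injEq]
      constructor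
      · rintro ⟨⟨ha, hb, hab⟩, habz⟩
        rcases huniq a b ha hb hab habz with h | h
        · exact Or.inl ⟨h.1, h.2⟩
        · exact Or.inr ⟨h.1, h.2⟩
      · rintro (⟨rfl, rfl⟩ | ⟨rfl, rfl⟩)
        · exact ⟨⟨hx, hy, hxy⟩, hsum⟩
        · exact ⟨⟨hy, hx, hxy.symm⟩, by rw [add_comm]; exact hsum⟩
    rw [hset, Finset.card_insert_of_notMem, Finset.card_singleton]
    simp only [Finset.mem_singleton, Prod.mk.injEq, not_and]
    exact fun h _ => hxy h
  -- cardinality count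
  have hVcard : Fintype.card (Fin d → ZMod 2) = 2^d := by
    simp [Fintype.card_fun]
  have hkle : k + 1 ≤ 2^d := by
    have h1 := Finset.card_le_univ (insert 0 S)
    rw [Finset.card_insert_of_notMem h0, hVcard] at h1
    exact h1
  have hTcard : T.card = 2^d - (k+1) := by
    rw [hT, Finset.card_sdiff_of_subset (Finset.subset_univ _), Finset.card_univ, hVcard,
      Finset.card_insert_of_notMem h0]
  have hoffcard : S.offDiag.card = 2 * (2^d - (k+1)) := by
    rw [Finset.card_eq_sum_card_fiberwise hmaps]
    rw [Finset.sum_congr rfl hfiber, Finset.sum_const, hTcard, smul_eq_mul, mul_comm]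
  have heq : 2^(d+1) = k^2 + k + 2 := by
    have ho := hoffcard
    rw [Finset.offDiag_card, ← hk] at ho
    have hsq : k^2 = k*k := sq k
    have hkk : k ≤ k*k := by nlinarith
    have hp : (2:ℕ)^(d+1) = 2 * 2^d := by rw [pow_succ, mul_comm]
    omega
  -- character sum
  have hd0 : 0 < d := by omega
  set i0 : Fin d := ⟨0, hd0⟩ with hi0
  set e : ZMod 2 → ℤ := fun a => if a = 0 then 1 else -1 with he_def
  set χ : (Fin d → ZMod 2) → ℤ := fun x => e (x i0) with hχ_def
  have he : ∀ a b : ZMod 2, e (a+b) = e a * e b := by decide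
  have hχ0 : χ 0 = 1 := by simp [hχ_def, he_def]
  have hχadd : ∀ x y, χ (x+y) = χ x * χ y := fun x y => he (x i0) (y i0)
  set u : Fin d → ZMod 2 := Pi.single i0 1 with hu
  have hui : u i0 = 1 := Pi.single_eq_same i0 1
  have hsum0 : ∑ x : Fin d → ZMod 2, χ x = 0 := by
    have h7 : ∀ b : ZMod 2, e b + e (b+1) = 0 := by decide
    have h8 : ∀ b : ZMod 2, b + 1 ≠ b := by decide
    refine Finset.sum_involution (fun x _ => x + u) ?_ ?_ (fun a ha => Finset.mem_univ _) ?_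
    · intro a ha
      show e (a i0) + e ((a + u) i0) = 0
      rw [Pi.add_apply, hui]
      exact h7 (a i0)
    · intro a ha _
      intro hcon
      have := congrFun hcon i0
      simp only [Pi.add_apply, hui] at this
      exact h8 (a i0) this
    · intro a ha
      show a + u + u = a
      rw [add_assoc, hadd u, add_zero]
  set lam : ℤ := ∑ s ∈ S, χ s with hlam
  have hsumT : ∑ z ∈ T, χ z = -(1 + lam) := by
    rw [hT, Finset.sum_sdiff_eq_sub (Finset.subset_univ _), hsum0,
      Finset.sum_insert h0, hχ0]
    ring
  have hlamsq : lam * lam = (k:ℤ) + 2 * (-(1 + lam)) := by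
    have hstep1 : lam * lam = ∑ p ∈ S ×ˢ S, χ (p.1 + p.2) := by
      rw [hlam, Finset.sum_mul_sum]
      rw [← Finset.sum_product']
      exact Finset.sum_congr rfl fun p _ => (hχadd p.1 p.2).symm
    have hsplit : (∑ p ∈ S ×ˢ S, χ (p.1 + p.2)) =
        (∑ p ∈ S.diag, χ (p.1 + p.2)) + ∑ p ∈ S.offDiag, χ (p.1 + p.2) := by
      rw [← Finset.diag_union_offDiag,
        Finset.sum_union (Finset.disjoint_diag_offDiag S)]
    have hdiag : (∑ p ∈ S.diag, χ (p.1 + p.2)) = (k:ℤ) := by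
      rw [Finset.sum_diag]
      have : ∀ a ∈ S, χ (a + a) = 1 := fun a _ => by rw [hadd, hχ0]
      rw [Finset.sum_congr rfl this, Finset.sum_const, hk]
      simp
    have hoff : (∑ p ∈ S.offDiag, χ (p.1 + p.2)) = 2 * ∑ z ∈ T, χ z := by
      rw [← Finset.sum_fiberwise_of_maps_to hmaps fun p => χ (p.1 + p.2)]
      rw [Finset.mul_sum]
      refine Finset.sum_congr rfl fun z hz => ?_
      have hin : ∀ p ∈ S.offDiag.filter (fun p => p.1 + p.2 = z), χ (p.1+p.2) = χ z := by
        intro p hp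
        rw [(Finset.mem_filter.1 hp).2]
      rw [Finset.sum_congr rfl hin, Finset.sum_const, hfiber z hz]
      simp [mul_comm]
    rw [hstep1, hsplit, hdiag, hoff, hsumT]
  have hkey : (lam + 1)^2 = (k:ℤ) - 1 := by ring_nf; ring_nf at hlamsq; linarith
  have hk1 : 1 ≤ (k:ℤ) := by nlinarith [sq_nonneg (lam+1)]
  set m : ℕ := (lam + 1).natAbs with hm_def
  have hm : m^2 + 1 = k := by
    have h9 : ((m:ℤ))^2 = (lam+1)^2 := by
      rw [hm_def]
      rw [← Int.abs_eq_natAbs, sq_abs]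
    have h10 : ((m:ℤ))^2 + 1 = (k:ℤ) := by rw [h9, hkey]; ring
    exact_mod_cast h10
  exact nt12 d k m hd heq hm
end
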